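/- arXiv:1005.4252 — 2 statements merged into one kernel-verified Lean document; each statement's English description precedes it below -/
import Mathlib

section
/- Let ψ(z) = ∑_{k=0}^{n} a_k z^k be a real polynomial with all zeros real and negative, with a_k = 0 for k outside {0,...,n}, and fix a positive integer p. Then every coefficient L_k^p = C(2p-1,p) a_k^2 + ∑_{j=1}^{p} (-1)^j C(2p,p-j) a_{k-j} a_{k+j}, for 0 ≤ k ≤ n, is nonnegative. -/
/-!
Factor `ψ(z) = c ∏ (z + y_i)` with `y_i ≥ 0`. In `ℝ[u, u⁻¹][t]`,
`ψ(ut) ψ(t/u) = c² ∏ (t² + y_i (u + u⁻¹) t + y_i²)`, so every `t`-coefficient is a polynomial with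
nonnegative coefficients in `s = u + u⁻¹`. The constant term of `(-1)^p (u - u⁻¹)^{2p} s^q` is
nonnegative: it vanishes for odd `q` by parity, and for even `q = 2r` it is the constant term of
`F(u) F(u⁻¹)` with `F = (u - u⁻¹)^p s^r`, a sum of squares. Pairing the `t^{2k}`-coefficient of
`ψ(ut) ψ(t/u)` with this kernel gives `2 L_k^p`.
-/

open Polynomial Finset
open LaurentPolynomial (T invert)
open scoped LaurentPolynomial NNReal

lemma Nat.choose_two_mul_eq_two_mul_choose_two_mul_sub_one {p : ℕ} (hp : 0 < p) :
    (2 * p).choose p = 2 * (2 * p - 1).choose p := by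
  obtain ⟨P, rfl⟩ : ∃ P, p = P + 1 := ⟨p - 1, by omega⟩
  rw [show 2 * (P + 1) - 1 = 2 * P + 1 by omega, show 2 * (P + 1) = 2 * P + 1 + 1 by ring,
    Nat.choose_succ_succ, Nat.choose_symm_half]
  ring

lemma Finset.sum_range_two_mul_add_one_of_symm {M : Type*} [AddCommMonoid M] (p : ℕ) (g : ℕ → M)
    (hg : ∀ j ≤ p, g (p - j) = g (p + j)) :
    ∑ m ∈ range (2 * p + 1), g m = g p + 2 • ∑ j ∈ Icc 1 p, g (p + j) := by
  have hIcc : ∑ j ∈ Icc 1 p, g (p + j) = ∑ x ∈ range p, g (p + (x + 1)) := by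
    rw [← Ico_add_one_right_eq_Icc, sum_Ico_eq_sum_range, Nat.add_sub_cancel]
    simp only [add_comm 1]
  have hlow : ∑ m ∈ range p, g m = ∑ x ∈ range p, g (p + (x + 1)) := by
    rw [← sum_range_reflect]
    refine sum_congr rfl fun x hx => ?_
    rw [mem_range] at hx
    rw [show p - 1 - x = p - (x + 1) by omega, hg _ (by omega)]
  rw [show 2 * p + 1 = p + (p + 1) by ring, sum_range_add, sum_range_succ', hlow, hIcc,
    add_zero, two_nsmul]
  abel

lemma Finset.sum_range_ite_intCast_eq {M : Type*} [AddCommMonoid M] {n : ℕ} {f : ℤ → M}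
    (hf : ∀ i : ℤ, (i < 0 ∨ (n : ℤ) < i) → f i = 0) (x : ℤ) :
    ∑ i ∈ range (n + 1), (if (i : ℤ) = x then f i else 0) = f x := by
  by_cases hx : 0 ≤ x ∧ x ≤ n
  · rw [sum_eq_single_of_mem x.toNat (mem_range.2 (by omega)) fun i _ hi => if_neg (by omega),
      if_pos (by omega), Int.toNat_of_nonneg hx.1]
  · rw [hf x (by omega)]
    exact sum_eq_zero fun i hi => by
      rw [mem_range] at hi
      exact if_neg (by omega)

theorem Polynomial.exists_eq_C_mul_prod_X_add_C_of_roots_neg (f : ℝ[X])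
    (hf : ∀ z : ℂ, (f.map (algebraMap ℝ ℂ)).IsRoot z → ∃ x : ℝ, x < 0 ∧ z = x) :
    ∃ ys : Multiset ℝ≥0, f = C f.leadingCoeff * (ys.map fun y : ℝ≥0 => X + C (y : ℝ)).prod := by
  have hsplits : f.Splits := .of_splits_map (algebraMap ℝ ℂ) (IsAlgClosed.splits _)
    fun z hz => by
      obtain ⟨x, -, rfl⟩ := hf z (isRoot_of_mem_roots hz)
      exact ⟨x, rfl⟩
  have hneg : ∀ x ∈ f.roots, x < 0 := fun x hx => by
    obtain ⟨x', hx', hxx'⟩ := hf x ((isRoot_of_mem_roots hx).map)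
    exact (Complex.ofReal_injective hxx') ▸ hx'
  refine ⟨f.roots.map fun x => (-x).toNNReal, ?_⟩
  conv_lhs => rw [hsplits.eq_prod_roots]
  rw [Multiset.map_map]
  congr 2
  refine Multiset.map_congr rfl fun x hx => ?_
  simp [Real.coe_toNNReal _ (neg_nonneg.2 (hneg x hx).le), sub_eq_add_neg]

theorem LaurentPolynomial.coeff_zero_mul_invert_self_nonneg {R : Type*} [CommRing R]
    [LinearOrder R] [IsStrictOrderedRing R] (f : R[T;T⁻¹]) : 0 ≤ (f * invert f).coeff 0 := by
  classical
  rw [AddMonoidAlgebra.coeff_mul]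
  refine Finset.sum_nonneg fun i _ => Finset.sum_nonneg fun j _ => ?_
  dsimp only
  split_ifs with h
  · rw [LaurentPolynomial.invert_apply, show -j = i by omega]
    exact mul_self_nonneg _
  · exact le_rfl

lemma LaurentPolynomial.C_mul_T_coeff {R : Type*} [Semiring R] (r : R) (e d : ℤ) :
    (C r * T e : R[T;T⁻¹]).coeff d = if e = d then r else 0 := by
  rw [← single_eq_C_mul_T, AddMonoidAlgebra.coeff_single, Finsupp.single_apply]

namespace GeneralizedTuran

noncomputable def cosT : ℝ[T;T⁻¹] := T 1 + T (-1)

noncomputable def kernel (p : ℕ) : ℝ[T;T⁻¹] := (-1) ^ p * (T 1 - T (-1)) ^ (2 * p)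

noncomputable def pairing (p : ℕ) (f : ℝ[T;T⁻¹]) : ℝ := (kernel p * f).coeff 0

lemma pairing_add (p : ℕ) (f g : ℝ[T;T⁻¹]) : pairing p (f + g) = pairing p f + pairing p g := by
  simp only [pairing, mul_add, AddMonoidAlgebra.coeff_add, Finsupp.add_apply]

lemma pairing_sum (p : ℕ) {ι : Type*} (s : Finset ι) (f : ι → ℝ[T;T⁻¹]) :
    pairing p (∑ i ∈ s, f i) = ∑ i ∈ s, pairing p (f i) := by
  simp only [pairing, mul_sum, AddMonoidAlgebra.coeff_sum, Finsupp.finsetSum_apply]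

lemma pairing_C_mul (p : ℕ) (r : ℝ) (f : ℝ[T;T⁻¹]) :
    pairing p (LaurentPolynomial.C r * f) = r * pairing p f := by
  rw [pairing, pairing, mul_left_comm, ← LaurentPolynomial.smul_eq_C_mul,
    AddMonoidAlgebra.coeff_smul, Finsupp.smul_apply, smul_eq_mul]

local notation "parity" => AddMonoidAlgebra.gradeBy ℝ (Int.castAddHom (ZMod 2))

lemma kernel_mul_cosT_pow_mem_parity (p q : ℕ) : kernel p * cosT ^ q ∈ parity (q : ZMod 2) := by
  have hT : ∀ n : ℤ, Odd n → (T n : ℝ[T;T⁻¹]) ∈ parity 1 := fun n hn => by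
    simpa [(ZMod.intCast_eq_one_iff_odd).2 hn] using
      AddMonoidAlgebra.single_mem_gradeBy (R := ℝ) (Int.castAddHom (ZMod 2)) n 1
  have hsign : ((-1) ^ p : ℝ[T;T⁻¹]) ∈ parity 0 := by
    simpa using SetLike.pow_mem_graded p (neg_mem (SetLike.one_mem_graded parity))
  have hsub : T 1 - T (-1) ∈ parity 1 := sub_mem (hT 1 odd_one) (hT _ (by decide))
  have hcos : cosT ∈ parity 1 := add_mem (hT 1 odd_one) (hT _ (by decide))
  rw [kernel]
  convert SetLike.mul_mem_graded (SetLike.mul_mem_graded hsign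
    (SetLike.pow_mem_graded (2 * p) hsub)) (SetLike.pow_mem_graded q hcos) using 2
  simp [show (2 : ZMod 2) = 0 from rfl]

lemma pairing_cosT_pow_of_odd (p : ℕ) {q : ℕ} (hq : Odd q) : pairing p (cosT ^ q) = 0 := by
  by_contra h
  have := (AddMonoidAlgebra.mem_gradeBy_iff _ _ _ _).1 (kernel_mul_cosT_pow_mem_parity p q)
    (Finsupp.mem_support_iff.2 h)
  simp [eq_comm, ZMod.natCast_eq_zero_iff_even, Nat.not_even_iff_odd.2 hq] at this

lemma kernel_mul_cosT_pow_two_mul (p r : ℕ) :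
    kernel p * cosT ^ (2 * r) = (T 1 - T (-1)) ^ p * cosT ^ r *
      invert ((T 1 - T (-1)) ^ p * cosT ^ r) := by
  have hinv : invert (T 1 - T (-1) : ℝ[T;T⁻¹]) = -(T 1 - T (-1)) := by
    rw [map_sub, LaurentPolynomial.invert_T, LaurentPolynomial.invert_T, neg_neg, neg_sub]
  have hcos : invert cosT = cosT := by
    rw [cosT, map_add, LaurentPolynomial.invert_T, LaurentPolynomial.invert_T, neg_neg, add_comm]
  rw [map_mul, map_pow, map_pow, hinv, hcos, neg_pow, kernel]
  ring

lemma pairing_cosT_pow_nonneg (p q : ℕ) : 0 ≤ pairing p (cosT ^ q) := by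
  obtain ⟨r, rfl⟩ | hq := Nat.even_or_odd q
  · rw [pairing, ← two_mul, kernel_mul_cosT_pow_two_mul]
    exact LaurentPolynomial.coeff_zero_mul_invert_self_nonneg _
  · rw [pairing_cosT_pow_of_odd p hq]

noncomputable def evalCosT : ℝ≥0[X] →+* ℝ[T;T⁻¹] :=
  eval₂RingHom (LaurentPolynomial.C.comp NNReal.toRealHom) cosT

lemma pairing_evalCosT_nonneg (p : ℕ) (g : ℝ≥0[X]) : 0 ≤ pairing p (evalCosT g) := by
  induction g using Polynomial.induction_on' with
  | add g h hg hh => rw [map_add, pairing_add]; exact add_nonneg hg hh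
  | monomial q c =>
    rw [evalCosT, coe_eval₂RingHom, eval₂_monomial, RingHom.comp_apply, pairing_C_mul]
    exact mul_nonneg c.2 (pairing_cosT_pow_nonneg p q)

/-- `f(t) ↦ f(ut) f(t/u)`, where `u` is the Laurent variable and `t` the polynomial variable. -/
noncomputable def twistedSquare : ℝ[X] →* ℝ[T;T⁻¹][X] :=
  (aeval (C (T 1) * X) : ℝ[X] →ₐ[ℝ] ℝ[T;T⁻¹][X]).toMonoidHom *
    (aeval (C (T (-1)) * X) : ℝ[X] →ₐ[ℝ] ℝ[T;T⁻¹][X]).toMonoidHom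

lemma twistedSquare_apply (f : ℝ[X]) :
    twistedSquare f = aeval (C (T 1) * X) f * aeval (C (T (-1)) * X) f := rfl

lemma twistedSquare_C (c : ℝ) : twistedSquare (C c) = C (LaurentPolynomial.C (c ^ 2)) := by
  rw [twistedSquare_apply, aeval_C, aeval_C, ← map_mul, ← sq, Polynomial.algebraMap_apply,
    ← LaurentPolynomial.C_eq_algebraMap, map_pow]

lemma twistedSquare_X_add_C (y : ℝ≥0) :
    twistedSquare (X + C (y : ℝ)) = (X ^ 2 + C (C y * X) * X + C (C (y ^ 2))).map evalCosT := by
  simp only [twistedSquare_apply, map_add, aeval_X, aeval_C, Polynomial.map_add,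
    Polynomial.map_pow, map_X, Polynomial.map_mul, map_C, evalCosT, coe_eval₂RingHom, eval₂_C,
    eval₂_X, eval₂_mul, Polynomial.algebraMap_apply, ← LaurentPolynomial.C_eq_algebraMap,
    RingHom.comp_apply, NNReal.coe_toRealHom]
  have hT : (C (T 1) * C (T (-1)) : ℝ[T;T⁻¹][X]) = 1 := by
    rw [← C_mul, ← LaurentPolynomial.T_add, add_neg_cancel, LaurentPolynomial.T_zero, C_1]
  rw [cosT, NNReal.coe_pow, map_pow, C_mul, map_add, C_pow]
  linear_combination X ^ 2 * hT

lemma pairing_coeff_twistedSquare_nonneg (p σ : ℕ) (c : ℝ) (ys : Multiset ℝ≥0) :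
    0 ≤ pairing p
      ((twistedSquare (C c * (ys.map fun y : ℝ≥0 => X + C (y : ℝ)).prod)).coeff σ) := by
  rw [map_mul, twistedSquare_C, map_multiset_prod, Multiset.map_map]
  rw [show twistedSquare ∘ (fun y : ℝ≥0 => X + C (y : ℝ)) =
      (Polynomial.map evalCosT) ∘ fun y : ℝ≥0 => X ^ 2 + C (C y * X) * X + C (C (y ^ 2)) from
    funext twistedSquare_X_add_C, ← Multiset.map_map, ← Polynomial.map_multiset_prod,
    coeff_C_mul, coeff_map, pairing_C_mul]
  exact mul_nonneg (sq_nonneg c) (pairing_evalCosT_nonneg p _)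

lemma kernel_eq_sum (p : ℕ) : kernel p = ∑ m ∈ range (2 * p + 1),
    LaurentPolynomial.C ((-1) ^ (p + m) * ((2 * p).choose m : ℝ)) * T (2 * m - 2 * p) := by
  rw [kernel, sub_pow, mul_sum]
  refine sum_congr rfl fun m hm => ?_
  have hm : m ≤ 2 * p := Nat.lt_succ_iff.1 (mem_range.1 hm)
  rw [LaurentPolynomial.T_pow, LaurentPolynomial.T_pow,
    show (2 * (m : ℤ) - 2 * p) = m * 1 + ((2 * p - m : ℕ) : ℤ) * (-1) by push_cast [hm]; ring,
    LaurentPolynomial.T_add, map_mul, map_pow, map_neg, map_one, map_natCast, pow_add, pow_add,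
    (even_two_mul p).neg_one_pow]
  ring

lemma pairing_C_mul_T (p : ℕ) (r : ℝ) (e : ℤ) :
    pairing p (LaurentPolynomial.C r * T e) = r * ∑ m ∈ range (2 * p + 1),
      if 2 * (m : ℤ) - 2 * p + e = 0 then (-1) ^ (p + m) * ((2 * p).choose m : ℝ) else 0 := by
  rw [pairing_C_mul, pairing, kernel_eq_sum, sum_mul, AddMonoidAlgebra.coeff_sum,
    Finsupp.finsetSum_apply]
  simp only [LaurentPolynomial.mul_T_assoc, LaurentPolynomial.C_mul_T_coeff]

lemma aeval_C_mul_X_sum (v : ℝ[T;T⁻¹]) (a : ℤ → ℝ) (n : ℕ) :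
    aeval (C v * X) (∑ i ∈ range (n + 1), C (a i) * X ^ i) =
      ∑ i ∈ range (n + 1), C (LaurentPolynomial.C (a i) * v ^ i) * X ^ i := by
  simp only [map_sum, map_mul, map_pow, aeval_C, aeval_X, Polynomial.algebraMap_apply,
    ← LaurentPolynomial.C_eq_algebraMap, mul_pow, mul_assoc]

lemma coeff_twistedSquare_sum {n : ℕ} {a : ℤ → ℝ}
    (ha : ∀ k : ℤ, (k < 0 ∨ (n : ℤ) < k) → a k = 0) (σ : ℕ) :
    (twistedSquare (∑ i ∈ range (n + 1), C (a i) * X ^ i)).coeff σ =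
      ∑ i ∈ range (n + 1), LaurentPolynomial.C (a i * a (σ - i)) * T (2 * i - σ) := by
  rw [twistedSquare_apply, aeval_C_mul_X_sum, aeval_C_mul_X_sum, sum_mul_sum, finsetSum_coeff]
  refine sum_congr rfl fun i _ => ?_
  have hterm : ∀ j : ℕ, (C (LaurentPolynomial.C (a i) * T 1 ^ i) * X ^ i *
      (C (LaurentPolynomial.C (a j) * T (-1) ^ j) * X ^ j)).coeff σ =
      if (j : ℤ) = σ - i then LaurentPolynomial.C (a i * a j) * T (i - j) else 0 := fun j => by
    rw [mul_mul_mul_comm, ← C_mul, ← pow_add, coeff_C_mul_X_pow]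
    by_cases h : σ = i + j
    · rw [if_pos h, if_pos (by omega), LaurentPolynomial.T_pow, LaurentPolynomial.T_pow, map_mul,
        sub_eq_add_neg, LaurentPolynomial.T_add]
      ring_nf
    · rw [if_neg h, if_neg (by omega)]
  rw [finsetSum_coeff, sum_congr rfl fun j _ => hterm j,
    sum_range_ite_intCast_eq (f := fun j => LaurentPolynomial.C (a i * a j) * T (i - j))
      (fun j hj => by simp [ha j hj])]
  congr 2
  ring

lemma pairing_coeff_twistedSquare_sum (p : ℕ) {n : ℕ} {a : ℤ → ℝ}
    (ha : ∀ k : ℤ, (k < 0 ∨ (n : ℤ) < k) → a k = 0) (k : ℕ) :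
    pairing p ((twistedSquare (∑ i ∈ range (n + 1), C (a i) * X ^ i)).coeff (2 * k)) =
      ∑ m ∈ range (2 * p + 1),
        (-1) ^ (p + m) * ((2 * p).choose m : ℝ) * (a (k + p - m) * a (k - p + m)) := by
  rw [coeff_twistedSquare_sum ha, pairing_sum]
  simp only [pairing_C_mul_T, mul_sum]
  rw [sum_comm]
  refine sum_congr rfl fun m _ => ?_
  have hterm : ∀ i : ℕ, a i * a ((2 * k : ℕ) - i) *
      (if 2 * (m : ℤ) - 2 * p + (2 * i - (2 * k : ℕ)) = 0
        then (-1) ^ (p + m) * ((2 * p).choose m : ℝ) else 0) =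
      if (i : ℤ) = k + p - m then (-1) ^ (p + m) * ((2 * p).choose m : ℝ) *
        (a i * a (2 * k - i)) else 0 := fun i => by
    push_cast
    by_cases h : (i : ℤ) = k + p - m
    · rw [if_pos (by omega), if_pos h]
      ring
    · rw [if_neg (by omega), if_neg h, mul_zero]
  rw [sum_congr rfl fun i _ => hterm i,
    sum_range_ite_intCast_eq (f := fun i => (-1) ^ (p + m) * ((2 * p).choose m : ℝ) *
      (a i * a (2 * k - i))) (fun i hi => by simp [ha i hi])]
  congr 3
  ring

def turanCoeff (p : ℕ) (a : ℤ → ℝ) (k : ℤ) : ℝ :=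
  ((2 * p - 1).choose p : ℝ) * a k ^ 2 +
    ∑ j ∈ Icc 1 p, (-1) ^ j * ((2 * p).choose (p - j) : ℝ) * a (k - j) * a (k + j)

lemma sum_range_kernel_coeff_eq_two_mul_turanCoeff (a : ℤ → ℝ) (k : ℤ) {p : ℕ} (hp : 0 < p) :
    ∑ m ∈ range (2 * p + 1),
        (-1) ^ (p + m) * ((2 * p).choose m : ℝ) * (a (k + p - m) * a (k - p + m)) =
      2 * turanCoeff p a k := by
  have hchoose : ∀ j ≤ p, (2 * p).choose (p + j) = (2 * p).choose (p - j) := fun j hj => by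
    rw [← Nat.choose_symm (by omega : p + j ≤ 2 * p), show 2 * p - (p + j) = p - j by omega]
  have hupper : ∀ j ≤ p, (-1) ^ (p + (p + j)) * ((2 * p).choose (p + j) : ℝ) *
      (a (k + p - (p + j : ℕ)) * a (k - p + (p + j : ℕ))) =
      (-1) ^ j * ((2 * p).choose (p - j) : ℝ) * a (k - j) * a (k + j) := fun j hj => by
    rw [hchoose j hj, show p + (p + j) = j + 2 * p by ring, pow_add, pow_mul, neg_one_sq, one_pow]
    push_cast
    ring_nf
  rw [turanCoeff, sum_range_two_mul_add_one_of_symm p _ fun j hj => ?_, nsmul_eq_mul,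
    sum_congr rfl fun j hj => hupper j (mem_Icc.1 hj).2, ← two_mul, pow_mul, neg_one_sq, one_pow,
    Nat.choose_two_mul_eq_two_mul_choose_two_mul_sub_one hp, add_sub_cancel_right, sub_add_cancel]
  · push_cast
    ring
  · rw [hupper j hj, show p + (p - j) = j + 2 * (p - j) by omega, pow_add, pow_mul, neg_one_sq,
      one_pow, mul_one]
    push_cast [hj]
    ring_nf

end GeneralizedTuran

/-- If `∑_{k=0}^n a_k z^k` has all zeros real and negative, then every coefficient
`L_k^p = C(2p-1,p) a_k² + ∑_{j=1}^p (-1)^j C(2p,p-j) a_{k-j} a_{k+j}` is nonnegative. -/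
theorem Lkp_nonneg (n p : ℕ) (hp : 0 < p) (a : ℤ → ℝ)
    (ha : ∀ k : ℤ, (k < 0 ∨ (n : ℤ) < k) → a k = 0)
    (hroots : ∀ z : ℂ,
      (∑ k ∈ Finset.range (n + 1), (a (k : ℤ) : ℂ) * z ^ k) = 0 →
      ∃ x : ℝ, x < 0 ∧ z = (x : ℂ)) :
    ∀ k ∈ Finset.range (n + 1),
      0 ≤ ((2 * p - 1).choose p : ℝ) * (a (k : ℤ)) ^ 2 +
          ∑ j ∈ Finset.Icc 1 p,
            (-1 : ℝ) ^ j * ((2 * p).choose (p - j) : ℝ) *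
              a ((k : ℤ) - j) * a ((k : ℤ) + j) := by
  intro k _
  set ψ : ℝ[X] := ∑ i ∈ range (n + 1), C (a i) * X ^ i
  obtain ⟨ys, hψ⟩ := ψ.exists_eq_C_mul_prod_X_add_C_of_roots_neg fun z hz =>
    hroots z (by simpa [ψ, eval_finsetSum] using hz)
  have hpair := GeneralizedTuran.pairing_coeff_twistedSquare_nonneg p (2 * k) ψ.leadingCoeff ys
  rw [← hψ, GeneralizedTuran.pairing_coeff_twistedSquare_sum p ha,
    GeneralizedTuran.sum_range_kernel_coeff_eq_two_mul_turanCoeff a k hp] at hpair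
  change 0 ≤ GeneralizedTuran.turanCoeff p a k
  linarith
end

section
/- For every positive integer n, ∑_{k=0}^{n} ( e_k(z_1,...,z_n)^2 - e_{k-1}(z_1,...,z_n) e_{k+1}(z_1,...,z_n) ) = e_n(z_1,...,z_n) * ∑_{k=0}^{⌊n/2⌋} C_k * e_{n-2k}(z_1 + 1/z_1, ..., z_n + 1/z_n), where C_k = C(2k,k)/(k+1) is the k-th Catalan number, as an identity of rational functions in nonzero variables z_1,...,z_n. -/
/-- The `k`-th elementary symmetric function of `z 0, …, z (n-1)`; it vanishes for `k > n`
and `esym n z 0 = 1`. -/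
noncomputable def esym (n : ℕ) (z : Fin n → ℂ) (k : ℕ) : ℂ :=
  ∑ s ∈ Finset.powersetCard k (Finset.univ : Finset (Fin n)), ∏ i ∈ s, z i

/-- Elementary symmetric function with integer index: `0` for negative index. -/
noncomputable def esymZ (n : ℕ) (z : Fin n → ℂ) (k : ℤ) : ℂ :=
  if 0 ≤ k then esym n z k.toNat else 0

/-!
Let `f = ∏ (1 + z_i X) = ∑ e_k X^k` and let `reflect n f = X^n f(1/X) = ∏ (z_i + X)`. The
coefficient of `X^n` in `X^d · f · reflect n f` is `∑ e_k e_{k+d}`, so the left-hand side is the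
coefficient of `X^n` in `(1 - X^2) · f · reflect n f`. Factorwise
`(1 + z X)(z + X) = z (X^2 + 1 + (z + z⁻¹) X)`, hence
`f · reflect n f = e_n ∑_m w_m X^m (X^2 + 1)^(n-m)` with `w_m = e_m(z_i + z_i⁻¹)`, and the
coefficient of `X^j` in `(1 - X^2)(1 + X^2)^j` is `C(2k, k) - C(2k, k-1) = catalan k` if `j = 2k`
and `0` if `j` is odd.
-/

open Polynomial Finset

section Polynomial

variable {R : Type*} [CommSemiring R]

theorem Polynomial.reflect_prod {ι : Type*} (s : Finset ι) (p : ι → R[X]) (N : ι → ℕ)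
    (h : ∀ i ∈ s, (p i).natDegree ≤ N i) :
    reflect (∑ i ∈ s, N i) (∏ i ∈ s, p i) = ∏ i ∈ s, reflect (N i) (p i) := by
  classical
  induction s using Finset.induction_on with
  | empty => simp [reflect_one]
  | insert a s ha ih =>
    have hs : ∀ i ∈ s, (p i).natDegree ≤ N i := fun i hi => h i (mem_insert_of_mem hi)
    rw [sum_insert ha, prod_insert ha, prod_insert ha,
      reflect_mul _ _ (h a (mem_insert_self a s))
        ((natDegree_prod_le _ _).trans (sum_le_sum hs)), ih hs]

theorem Polynomial.coeff_X_pow_mul_mul_reflect {f : R[X]} {N : ℕ} (hf : f.natDegree ≤ N)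
    (d : ℕ) :
    (X ^ d * f * reflect N f).coeff N = ∑ k ∈ range (N + 1), f.coeff k * f.coeff (k + d) := by
  rw [mul_comm (X ^ d), mul_assoc, coeff_mul, Nat.sum_antidiagonal_eq_sum_range_succ_mk]
  refine sum_congr rfl fun k hk => ?_
  rw [mem_range] at hk
  rw [coeff_X_pow_mul', coeff_reflect]
  split_ifs with hd
  · rw [revAt_le (by omega), show N - (N - k - d) = k + d by omega]
  · rw [coeff_eq_zero_of_natDegree_lt (n := k + d) (by omega), mul_zero]

theorem Polynomial.coeff_mul_sum_C_mul_X_pow_mul_pow (g h : R[X]) (w : ℕ → R) (n : ℕ) :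
    (g * ∑ m ∈ range (n + 1), C (w m) * X ^ m * h ^ (n - m)).coeff n =
      ∑ m ∈ range (n + 1), w m * (g * h ^ (n - m)).coeff (n - m) := by
  rw [mul_sum, finsetSum_coeff]
  refine sum_congr rfl fun m hm => ?_
  rw [show g * (C (w m) * X ^ m * h ^ (n - m)) = C (w m) * (g * h ^ (n - m) * X ^ m) by ring,
    coeff_C_mul, coeff_mul_X_pow', if_pos (by rw [mem_range] at hm; omega)]

end Polynomial

section Catalan

theorem catalan_succ_add_choose (k : ℕ) :
    catalan (k + 1) + (2 * (k + 1)).choose k = (2 * (k + 1)).choose (k + 1) := by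
  have hcat := succ_mul_catalan_eq_centralBinom (k + 1)
  have hpascal := Nat.choose_succ_right_eq (2 * (k + 1)) k
  rw [Nat.centralBinom_eq_two_mul_choose] at hcat
  rw [show 2 * (k + 1) - k = k + 2 by omega] at hpascal
  apply Nat.eq_of_mul_eq_mul_left (show 0 < k + 2 by omega)
  nlinarith

theorem catalan_eq_choose_div (k : ℕ) :
    (catalan k : ℚ) = (2 * k).choose k / ((k : ℚ) + 1) := by
  rw [eq_div_iff (by positivity), ← Nat.centralBinom_eq_two_mul_choose,
    ← succ_mul_catalan_eq_centralBinom]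
  push_cast
  ring

variable {R : Type*} [CommRing R]

theorem Polynomial.coeff_one_sub_X_mul_X_add_one_pow (k : ℕ) :
    ((1 - X) * (X + 1) ^ (2 * k) : R[X]).coeff k = catalan k := by
  cases k with
  | zero => simp
  | succ k =>
    rw [sub_mul, one_mul, coeff_sub, coeff_X_mul, coeff_X_add_one_pow, coeff_X_add_one_pow,
      ← catalan_succ_add_choose]
    push_cast
    ring

theorem Polynomial.coeff_one_sub_X_sq_mul_X_sq_add_one_pow (j : ℕ) :
    ((1 - X ^ 2) * (X ^ 2 + 1) ^ j : R[X]).coeff j =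
      if Even j then (catalan (j / 2) : R) else 0 := by
  have hexpand : ((1 - X ^ 2) * (X ^ 2 + 1) ^ j : R[X]) = expand R 2 ((1 - X) * (X + 1) ^ j) := by
    simp [expand_X]
  rw [hexpand, coeff_expand two_pos]
  by_cases hj : Even j
  · obtain ⟨k, rfl⟩ := hj
    rw [if_pos (Even.add_self k), ← two_mul, if_pos (dvd_mul_right 2 k),
      Nat.mul_div_cancel_left k two_pos, coeff_one_sub_X_mul_X_add_one_pow]
  · rw [if_neg hj, if_neg (mt even_iff_two_dvd.mpr hj)]

theorem Finset.sum_range_succ_ite_even {M : Type*} [AddCommMonoid M] (F : ℕ → M) (n : ℕ) :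
    ∑ j ∈ range (n + 1), (if Even j then F (j / 2) else 0) = ∑ k ∈ range (n / 2 + 1), F k := by
  induction n with
  | zero => simp
  | succ n ih =>
    rw [sum_range_succ, ih]
    rcases Nat.even_or_odd (n + 1) with ⟨m, hm⟩ | ⟨m, hm⟩
    · rw [if_pos ⟨m, hm⟩, show (n + 1) / 2 = n / 2 + 1 by omega, sum_range_succ _ (n / 2 + 1)]
    · rw [if_neg (Nat.not_even_iff_odd.mpr ⟨m, hm⟩), add_zero, show (n + 1) / 2 = n / 2 by omega]

theorem Polynomial.sum_mul_coeff_one_sub_X_sq_mul_X_sq_add_one_pow (w : ℕ → R) (n : ℕ) :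
    ∑ m ∈ range (n + 1), w m * ((1 - X ^ 2) * (X ^ 2 + 1) ^ (n - m) : R[X]).coeff (n - m) =
      ∑ k ∈ range (n / 2 + 1), (catalan k : R) * w (n - 2 * k) := by
  rw [← sum_range_reflect, ← sum_range_succ_ite_even]
  refine sum_congr rfl fun j hj => ?_
  rw [mem_range] at hj
  rw [add_tsub_cancel_right, show n - (n - j) = j by omega,
    coeff_one_sub_X_sq_mul_X_sq_add_one_pow]
  split_ifs with hev
  · rw [mul_comm, Nat.mul_div_cancel' (even_iff_two_dvd.mp hev)]
  · rw [mul_zero]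

end Catalan

section ElementarySymmetric

variable {n : ℕ} (z : Fin n → ℂ)

theorem esym_eq_zero_of_lt {k : ℕ} (hk : n < k) : esym n z k = 0 := by
  rw [esym, powersetCard_eq_empty.2 (by simpa using hk), sum_empty]

theorem esym_self : esym n z n = ∏ i, z i := by
  have hsingle : powersetCard n (univ : Finset (Fin n)) = {univ} := by
    simpa using powersetCard_self (univ : Finset (Fin n))
  rw [esym, hsingle, sum_singleton]

theorem prod_C_mul_add_eq_sum_esym (p q : ℂ[X]) :
    ∏ i, (C (z i) * p + q) = ∑ m ∈ range (n + 1), C (esym n z m) * p ^ m * q ^ (n - m) := by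
  rw [prod_add, sum_powerset, card_univ, Fintype.card_fin]
  refine sum_congr rfl fun m _ => ?_
  rw [esym, map_sum, sum_mul, sum_mul]
  refine sum_congr rfl fun t ht => ?_
  rw [mem_powersetCard] at ht
  rw [prod_mul_distrib, prod_const, prod_const, card_sdiff_of_subset ht.1, card_univ,
    Fintype.card_fin, ht.2, map_prod]

theorem coeff_prod_C_mul_X_add_one (k : ℕ) :
    (∏ i, (C (z i) * X + 1)).coeff k = esym n z k := by
  rw [prod_C_mul_add_eq_sum_esym, finsetSum_coeff]
  simp only [one_pow, mul_one, coeff_C_mul_X_pow]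
  rw [sum_ite_eq, ite_eq_left_iff]
  intro hk
  rw [esym_eq_zero_of_lt z (by simpa using hk)]

theorem natDegree_prod_C_mul_X_add_one_le : (∏ i, (C (z i) * X + 1)).natDegree ≤ n :=
  natDegree_le_iff_coeff_eq_zero.2 fun _ hk => by
    rw [coeff_prod_C_mul_X_add_one, esym_eq_zero_of_lt z hk]

theorem reflect_prod_C_mul_X_add_one :
    reflect n (∏ i, (C (z i) * X + 1)) = ∏ i, (C (z i) + X) := by
  rw [show reflect n _ = reflect (∑ _i : Fin n, 1) (∏ i, (C (z i) * X + 1)) by simp,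
    reflect_prod _ _ _ fun i _ => by simpa using natDegree_linear_le (a := z i) (b := 1)]
  refine prod_congr rfl fun i _ => ?_
  rw [reflect_add, ← pow_one X, reflect_C_mul_X_pow, reflect_one, revAt_le le_rfl]
  simp

theorem sum_esymZ_sub_one_mul_esym_succ :
    ∑ k ∈ range (n + 1), esymZ n z ((k : ℤ) - 1) * esym n z (k + 1) =
      ∑ k ∈ range (n + 1), esym n z k * esym n z (k + 2) := by
  rw [sum_range_succ', sum_range_succ, esym_eq_zero_of_lt z (k := n + 2) (by omega)]
  simp [esymZ]

end ElementarySymmetric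

theorem C_mul_X_add_one_mul_C_add_X {K : Type*} [Field K] {a : K} (ha : a ≠ 0) :
    (C a * X + 1) * (C a + X) = C a * (C (a + a⁻¹) * X + (X ^ 2 + 1)) := by
  have hC : C a * C (a + a⁻¹) = C a * C a + 1 := by
    rw [← C_mul, mul_add, mul_inv_cancel₀ ha, C_add, C_mul, C_1]
  linear_combination (-X : K[X]) * hC

theorem prod_C_mul_X_add_one_mul_reflect {n : ℕ} {z : Fin n → ℂ} (hz : ∀ i, z i ≠ 0) :
    (∏ i, (C (z i) * X + 1)) * reflect n (∏ i, (C (z i) * X + 1)) =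
      C (esym n z n) * ∑ m ∈ range (n + 1),
        C (esym n (fun i => z i + (z i)⁻¹) m) * X ^ m * (X ^ 2 + 1) ^ (n - m) := by
  rw [reflect_prod_C_mul_X_add_one, ← prod_mul_distrib,
    prod_congr rfl fun i _ => C_mul_X_add_one_mul_C_add_X (hz i), prod_mul_distrib, ← map_prod,
    ← esym_self, prod_C_mul_add_eq_sum_esym]

theorem esym_catalan_identity_general (n : ℕ) (z : Fin n → ℂ) (hz : ∀ i, z i ≠ 0) :
    ∑ k ∈ Finset.range (n + 1),
        ((esym n z k) ^ 2 - esymZ n z ((k : ℤ) - 1) * esym n z (k + 1)) =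
      esym n z n *
        ∑ k ∈ Finset.range (n / 2 + 1),
          ((((2 * k).choose k : ℚ) / ((k : ℚ) + 1) : ℚ) : ℂ) *
            esym n (fun i => z i + (z i)⁻¹) (n - 2 * k) := by
  set f : ℂ[X] := ∏ i, (C (z i) * X + 1)
  have hf := natDegree_prod_C_mul_X_add_one_le z
  calc _ = (X ^ 0 * f * reflect n f).coeff n - (X ^ 2 * f * reflect n f).coeff n := by
        rw [coeff_X_pow_mul_mul_reflect hf, coeff_X_pow_mul_mul_reflect hf, sum_sub_distrib,
          sum_esymZ_sub_one_mul_esym_succ]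
        simp only [coeff_prod_C_mul_X_add_one, add_zero, sq]
    _ = ((1 - X ^ 2) * (f * reflect n f)).coeff n := by
        rw [← coeff_sub]
        congr 1
        ring
    _ = esym n z n * ∑ m ∈ range (n + 1), esym n (fun i => z i + (z i)⁻¹) m *
          ((1 - X ^ 2) * (X ^ 2 + 1) ^ (n - m) : ℂ[X]).coeff (n - m) := by
        rw [prod_C_mul_X_add_one_mul_reflect hz, mul_left_comm, coeff_C_mul,
          coeff_mul_sum_C_mul_X_pow_mul_pow]
    _ = _ := by
        simp only [sum_mul_coeff_one_sub_X_sq_mul_X_sq_add_one_pow, ← catalan_eq_choose_div,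
          Rat.cast_natCast]

/-- `∑_{k=0}^n (e_k² - e_{k-1} e_{k+1}) = e_n · ∑_{k=0}^{⌊n/2⌋} C_k e_{n-2k}(z_i + 1/z_i)`,
where `C_k = C(2k,k)/(k+1)` is the `k`-th Catalan number. -/
theorem esym_catalan_identity (n : ℕ) (hn : 0 < n) (z : Fin n → ℂ) (hz : ∀ i, z i ≠ 0) :
    ∑ k ∈ Finset.range (n + 1),
        ((esym n z k) ^ 2 - esymZ n z ((k : ℤ) - 1) * esym n z (k + 1)) =
      esym n z n *
        ∑ k ∈ Finset.range (n / 2 + 1),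
          ((((2 * k).choose k : ℚ) / ((k : ℚ) + 1) : ℚ) : ℂ) *
            esym n (fun i => z i + (z i)⁻¹) (n - 2 * k) :=
  esym_catalan_identity_general n z hz
end
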